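/- Let q be an annular link state on Z/n with t defects, and let p be the link state obtained by rotating q by one place (i and j connected in q iff i+1 and j+1 connected in p, indices mod n). Then for each vertex i, either i is a defect of q, or i and i+1 lie in the same connected component of the pair graph Γ(q,p). -/

import Mathlib

open scoped Classical

/-- `k` lies in the open cyclic interval `(i, j)` of `ZMod n`. -/
def cyclicBetween (n : ℕ) [NeZero n] (i j k : ZMod n) : Prop :=
  ∃ m : ℕ, 0 < m ∧ m < (j - i).val ∧ k = i + (m : ZMod n)

/-- An annular link state on `ZMod n`: a partition into parts of size 1 (defects) and 2
(connections, recorded in `pairs`) such that whenever `i` and `j` are connected, the open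
cyclic intervals `(i,j)` and `(j,i)` are unions of parts, and all defects lie in `(i,j)`
or all lie in `(j,i)`. -/
structure AnnularLS (n : ℕ) [NeZero n] where
  pairs : Finset (Finset (ZMod n))
  card_two : ∀ s ∈ pairs, s.card = 2
  disj : ∀ s ∈ pairs, ∀ t ∈ pairs, s ≠ t → Disjoint s t
  interval_closed : ∀ s ∈ pairs, ∀ i ∈ s, ∀ j ∈ s, i ≠ j →
    ∀ t ∈ pairs, ∀ k ∈ t, ∀ l ∈ t,
      cyclicBetween n i j k → cyclicBetween n i j l
  defects_one_side : ∀ s ∈ pairs, ∀ i ∈ s, ∀ j ∈ s, i ≠ j →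
    (∀ d : ZMod n, (∀ t ∈ pairs, d ∉ t) → cyclicBetween n i j d) ∨
    (∀ d : ZMod n, (∀ t ∈ pairs, d ∉ t) → cyclicBetween n j i d)

/-- The defects of an annular link state. -/
noncomputable def AnnularLS.defects {n : ℕ} [NeZero n] (q : AnnularLS n) :
    Finset (ZMod n) :=
  Finset.univ.filter (fun i => ∀ s ∈ q.pairs, i ∉ s)

/-- The pair graph of two link states: `i` and `j` are adjacent if some connection of one
of the two link states joins them. -/
def pairGraph (n : ℕ) [NeZero n] (q p : AnnularLS n) : SimpleGraph (ZMod n) :=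
  SimpleGraph.fromRel (fun i j => ∃ s ∈ q.pairs ∪ p.pairs, i ∈ s ∧ j ∈ s)

/-! Call an open arc `(x, y)` matched by `q` if each of its points is connected by `q` to another
point of the arc. For a matched arc, `y` and `x + 1` are joined in `Γ(q, p)`, by induction on the
length of the arc: if `x + 1` is connected to `l`, the arcs `(x + 1, l)` and `(l, y)` are matched
and shorter, giving paths `l ~ x + 2` and `y ~ l + 1`, which the connection `{x + 1, l}` of `q`
and its rotation `{x + 2, l + 1}` in `p` join into a path `y ~ x + 1`.

A vertex `i` that is not a defect is connected to some `j`, and the arc between `i` and `j` that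
holds no defect is matched. Hence `i — j ~ i + 1` or `i ~ j + 1 — i + 1`. -/

namespace ZMod

variable {n : ℕ} [NeZero n]

theorem val_sub_add_val_sub (x a b : ZMod n) :
    (b - a).val + (a - x).val = (b - x).val ∨
      (b - a).val + (a - x).val = (b - x).val + n := by
  have hsum : b - a + (a - x) = b - x := sub_add_sub_cancel b a x
  rcases lt_or_ge ((b - a).val + (a - x).val) n with h | h
  · exact Or.inl (hsum ▸ (val_add_of_lt h).symm)
  · exact Or.inr (hsum ▸ val_add_val_of_le h)

theorem eq_of_val_sub_eq {x a b : ZMod n} (h : (a - x).val = (b - x).val) : a = b :=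
  sub_left_injective (val_injective n h)

end ZMod

section CyclicInterval

variable {n : ℕ} [NeZero n] {i j k x y a b : ZMod n}

theorem cyclicBetween_iff :
    cyclicBetween n i j k ↔ 0 < (k - i).val ∧ (k - i).val < (j - i).val := by
  constructor
  · rintro ⟨m, hm0, hmj, rfl⟩
    rw [add_sub_cancel_left, ZMod.val_natCast_of_lt (hmj.trans (ZMod.val_lt _))]
    exact ⟨hm0, hmj⟩
  · rintro ⟨hk0, hkj⟩
    exact ⟨(k - i).val, hk0, hkj, by rw [ZMod.natCast_zmod_val]; ring⟩

theorem cyclicBetween_iff_of_le (x : ZMod n) (hab : (a - x).val ≤ (b - x).val) :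
    cyclicBetween n a b k ↔ (a - x).val < (k - x).val ∧ (k - x).val < (b - x).val := by
  rw [cyclicBetween_iff]
  have := ZMod.val_lt (b - x)
  have := ZMod.val_lt (b - a)
  have := ZMod.val_lt (k - a)
  rcases ZMod.val_sub_add_val_sub x a k with hk | hk <;>
  rcases ZMod.val_sub_add_val_sub x a b with hb | hb <;> omega

theorem not_cyclicBetween_swap (h : cyclicBetween n i j k) : ¬ cyclicBetween n j i k := by
  rw [cyclicBetween_iff] at h ⊢
  have := ZMod.val_lt (k - j)
  have := ZMod.val_lt (i - j)
  rcases ZMod.val_sub_add_val_sub i j k with hk | hk <;>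
  rcases ZMod.val_sub_add_val_sub i j i with hi | hi <;>
  rw [sub_self, ZMod.val_zero] at hi <;> omega

theorem val_sub_lt_of_cyclicBetween (h : cyclicBetween n x y k) :
    (k - x).val < (y - x).val ∧ (y - k).val < (y - x).val := by
  rw [cyclicBetween_iff] at h
  have := ZMod.val_lt (y - k)
  rcases ZMod.val_sub_add_val_sub x k y with hy | hy <;> omega

theorem cyclicBetween_of_subinterval (ha : (a - x).val ≤ (b - x).val)
    (hb : (b - x).val ≤ (y - x).val) (hk : cyclicBetween n a b k) : cyclicBetween n x y k := by
  rw [cyclicBetween_iff_of_le x ha] at hk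
  rw [cyclicBetween_iff]
  omega

theorem cyclicBetween_self_add_one (hxy : y ≠ x) (hy : y ≠ x + 1) :
    cyclicBetween n x y (x + 1) := by
  have hn : n ≠ 1 := by rintro rfl; exact hxy (Subsingleton.elim _ _)
  rw [cyclicBetween_iff, add_sub_cancel_left, ZMod.val_one'' hn]
  have h0 : (y - x).val ≠ 0 := by rw [Ne, ZMod.val_eq_zero, sub_eq_zero]; exact hxy
  have h1 : (y - x).val ≠ 1 := fun h =>
    hy (ZMod.eq_of_val_sub_eq (by rwa [add_sub_cancel_left, ZMod.val_one'' hn]))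
  omega

end CyclicInterval

namespace AnnularLS

variable {n : ℕ} [NeZero n] (q : AnnularLS n)

def Linked (k l : ZMod n) : Prop := k ≠ l ∧ {k, l} ∈ q.pairs

def MatchesInterval (x y : ZMod n) : Prop :=
  ∀ k, cyclicBetween n x y k → ∃ l, q.Linked k l ∧ cyclicBetween n x y l

variable {q} {i j k l l' x y : ZMod n}

theorem mem_defects : k ∈ q.defects ↔ ∀ s ∈ q.pairs, k ∉ s := by
  simp [defects]

theorem Linked.ne (h : q.Linked k l) : k ≠ l := h.1

theorem Linked.symm (h : q.Linked k l) : q.Linked l k :=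
  ⟨h.1.symm, Finset.pair_comm k l ▸ h.2⟩

theorem Linked.unique (h : q.Linked k l) (h' : q.Linked k l') : l = l' := by
  have hpair : ({k, l} : Finset (ZMod n)) = {k, l'} := by
    by_contra hne
    exact Finset.disjoint_left.mp (q.disj _ h.2 _ h'.2 hne) (Finset.mem_insert_self k _)
      (Finset.mem_insert_self k _)
  have hl : l ∈ ({k, l'} : Finset (ZMod n)) := hpair ▸ by simp
  simpa [h.ne.symm] using hl

theorem exists_linked_of_not_mem_defects (hk : k ∉ q.defects) : ∃ l, q.Linked k l := by
  obtain ⟨s, hs, hks⟩ : ∃ s ∈ q.pairs, k ∈ s := by simpa [mem_defects] using hk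
  obtain ⟨a, b, hab, rfl⟩ := Finset.card_eq_two.mp (q.card_two s hs)
  rcases Finset.mem_insert.mp hks with rfl | hkb
  · exact ⟨b, hab, hs⟩
  · rw [Finset.mem_singleton.mp hkb]
    exact ⟨a, hab.symm, Finset.pair_comm a b ▸ hs⟩

theorem Linked.cyclicBetween_of_linked (h : q.Linked i j) (hkl : q.Linked k l)
    (hk : cyclicBetween n i j k) : cyclicBetween n i j l :=
  q.interval_closed _ h.2 i (by simp) j (by simp) h.ne _ hkl.2 k (by simp) l (by simp) hk

theorem Linked.defects_one_side (h : q.Linked i j) :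
    (∀ d ∈ q.defects, cyclicBetween n i j d) ∨ (∀ d ∈ q.defects, cyclicBetween n j i d) := by
  simpa only [mem_defects] using q.defects_one_side _ h.2 i (by simp) j (by simp) h.ne

theorem MatchesInterval.not_mem_defects (hm : q.MatchesInterval x y)
    (hk : cyclicBetween n x y k) : k ∉ q.defects := fun hd =>
  have ⟨_, hkl, _⟩ := hm k hk
  (mem_defects.mp hd) _ hkl.2 (by simp)

theorem Linked.matchesInterval (h : q.Linked i j)
    (hd : ∀ k, cyclicBetween n i j k → k ∉ q.defects) : q.MatchesInterval i j := fun k hk =>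
  have ⟨l, hkl⟩ := exists_linked_of_not_mem_defects (hd k hk)
  ⟨l, hkl, h.cyclicBetween_of_linked hkl hk⟩

variable {p : AnnularLS n} {a b : ZMod n}

theorem MatchesInterval.inside_link (hm : q.MatchesInterval x y) (h : q.Linked (x + 1) l)
    (hl : cyclicBetween n x y l) : q.MatchesInterval (x + 1) l := by
  have hlx : l ≠ x := by rintro rfl; simp [cyclicBetween_iff] at hl
  have h1l := (cyclicBetween_iff.mp (cyclicBetween_self_add_one hlx h.ne.symm)).2
  exact h.matchesInterval fun k hk =>
    hm.not_mem_defects (cyclicBetween_of_subinterval h1l.le (cyclicBetween_iff.mp hl).2.le hk)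

/-- `[x + 1, l]` is a union of connections, so the partner of a point beyond `l` lies beyond `l`
as well. -/
theorem MatchesInterval.beyond_link (hm : q.MatchesInterval x y) (h : q.Linked (x + 1) l)
    (hl : cyclicBetween n x y l) : q.MatchesInterval l y := by
  have hn : n ≠ 1 := by rintro rfl; exact h.ne (Subsingleton.elim _ _)
  have h1 : (x + 1 - x).val = 1 := by rw [add_sub_cancel_left, ZMod.val_one'' hn]
  have hlx := cyclicBetween_iff.mp hl
  have hl1 : (l - x).val ≠ 1 := fun h' => h.ne (ZMod.eq_of_val_sub_eq (h1.trans h'.symm))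
  have hly : (l - x).val ≤ (y - x).val := hlx.2.le
  intro k hk
  obtain ⟨k', hkk', hk'⟩ := hm k (cyclicBetween_of_subinterval hly le_rfl hk)
  refine ⟨k', hkk', ?_⟩
  rw [cyclicBetween_iff_of_le x hly] at hk ⊢
  rw [cyclicBetween_iff] at hk'
  have hne1 : (k' - x).val ≠ 1 := fun h' => by
    obtain rfl : k' = x + 1 := ZMod.eq_of_val_sub_eq (h'.trans h1.symm)
    obtain rfl := h.unique hkk'.symm
    omega
  have hnel : (k' - x).val ≠ (l - x).val := fun h' => by
    obtain rfl : k' = l := ZMod.eq_of_val_sub_eq h'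
    obtain rfl := h.symm.unique hkk'.symm
    omega
  have h1l : (x + 1 - x).val ≤ (l - x).val := by omega
  have hout : ¬ (1 < (k' - x).val ∧ (k' - x).val < (l - x).val) := fun h' => by
    have hkin := h.cyclicBetween_of_linked hkk'.symm
      ((cyclicBetween_iff_of_le x h1l).mpr (h1 ▸ h'))
    rw [cyclicBetween_iff_of_le x h1l] at hkin
    omega
  omega

theorem Linked.add_one (hp : p.pairs = q.pairs.image (fun s => s.image (· + 1)))
    (h : q.Linked a b) : p.Linked (a + 1) (b + 1) :=
  ⟨fun e => h.ne (add_right_cancel e),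
    hp ▸ Finset.mem_image.mpr ⟨{a, b}, h.2, by simp [Finset.image_insert]⟩⟩

end AnnularLS

section PairGraph

open AnnularLS

variable {n : ℕ} [NeZero n] {q p : AnnularLS n} {a b : ZMod n}

theorem pairGraph_adj_of_linked_left (h : q.Linked a b) : (pairGraph n q p).Adj a b :=
  (SimpleGraph.fromRel_adj _ _ _).mpr
    ⟨h.ne, Or.inl ⟨_, Finset.mem_union_left _ h.2, by simp, by simp⟩⟩

theorem pairGraph_adj_of_linked_right (h : p.Linked a b) : (pairGraph n q p).Adj a b :=
  (SimpleGraph.fromRel_adj _ _ _).mpr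
    ⟨h.ne, Or.inl ⟨_, Finset.mem_union_right _ h.2, by simp, by simp⟩⟩

theorem reachable_add_one_of_matchesInterval
    (hp : p.pairs = q.pairs.image (fun s => s.image (· + 1))) {x y : ZMod n} (hxy : x ≠ y)
    (hm : q.MatchesInterval x y) : (pairGraph n q p).Reachable y (x + 1) := by
  induction hM : (y - x).val using Nat.strong_induction_on generalizing x y with
  | _ M ih =>
  subst hM
  by_cases hy : y = x + 1
  · rw [hy]
  obtain ⟨l, hlink, hl⟩ := hm _ (cyclicBetween_self_add_one hxy.symm hy)
  have hlx : l ≠ x := by rintro rfl; simp [cyclicBetween_iff] at hl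
  obtain ⟨hxl_lt, hly_lt⟩ := val_sub_lt_of_cyclicBetween hl
  have hx1l := (val_sub_lt_of_cyclicBetween (cyclicBetween_self_add_one hlx hlink.ne.symm)).2
  have reach_inside : (pairGraph n q p).Reachable l (x + 1 + 1) :=
    ih _ (hx1l.trans hxl_lt) hlink.ne (hm.inside_link hlink hl) rfl
  have reach_beyond : (pairGraph n q p).Reachable y (l + 1) :=
    ih _ hly_lt (by rintro rfl; simp at hxl_lt) (hm.beyond_link hlink hl) rfl
  exact reach_beyond.trans <|
    (pairGraph_adj_of_linked_right (hlink.symm.add_one hp)).reachable.trans <|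
    reach_inside.symm.trans (pairGraph_adj_of_linked_left hlink.symm).reachable

end PairGraph

/-- If `p` is the rotation of the annular link state `q` by one place, then every vertex
`i` either is a defect of `q` or is connected to `i + 1` in the pair graph `Γ(q,p)`. -/
theorem stmt_11 (n : ℕ) [NeZero n] (q p : AnnularLS n)
    (hp : p.pairs = q.pairs.image (fun s => s.image (· + 1))) :
    ∀ i : ZMod n, i ∈ q.defects ∨ (pairGraph n q p).Reachable i (i + 1) := by
  intro i
  refine or_iff_not_imp_left.mpr fun hi => ?_
  obtain ⟨j, hij⟩ := q.exists_linked_of_not_mem_defects hi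
  rcases hij.defects_one_side with hside | hside
  · have hm : q.MatchesInterval j i := hij.symm.matchesInterval fun k hk hd =>
      not_cyclicBetween_swap (hside k hd) hk
    exact (reachable_add_one_of_matchesInterval hp hij.ne.symm hm).trans
      (pairGraph_adj_of_linked_right (hij.symm.add_one hp)).reachable
  · have hm : q.MatchesInterval i j := hij.matchesInterval fun k hk hd =>
      not_cyclicBetween_swap (hside k hd) hk
    exact (pairGraph_adj_of_linked_left hij).reachable.trans
      (reachable_add_one_of_matchesInterval hp hij.ne hm)
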